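/- arXiv:2003.02458 — 5 statements merged into one kernel-verified Lean document; each statement's English description precedes it below -/
import Mathlib

section
/- Suppose G_1, …, G_K and G_z are positive definite Hermitian M×M complex matrices. Then the function J_W(W) = Σ_{k=1}^K w_k^H G_k w_k + trace(W_z^H G_z W_z) − 2 log|det W|, defined on the set of invertible complex M×M matrices W, is bounded from below and attains its minimum at some invertible matrix W. -/
/- STATEMENT 0.
M×M complex matrices are encoded as matrices indexed by `Fin K ⊕ Fin L`,
where `M = K + L`, `K ≥ 1`, `L = M - K ≥ 1`. The first `K` columns (indexed by
`Sum.inl`) form `W_s` (with columns `w_k`) and the last `L` columns (indexed by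
`Sum.inr`) form `W_z`. -/

open Matrix
open scoped ComplexOrder

/-- The cost function
`J_W(W) = Σ_{k=1}^K w_k^H G_k w_k + trace(W_z^H G_z W_z) − 2 log|det W|`. -/
noncomputable def JW {K L : ℕ}
    (G : Fin K → Matrix (Fin K ⊕ Fin L) (Fin K ⊕ Fin L) ℂ)
    (Gz : Matrix (Fin K ⊕ Fin L) (Fin K ⊕ Fin L) ℂ)
    (W : Matrix (Fin K ⊕ Fin L) (Fin K ⊕ Fin L) ℂ) : ℝ :=
  (∑ k : Fin K,
      (star (fun i => W i (Sum.inl k)) ⬝ᵥ ((G k) *ᵥ (fun i => W i (Sum.inl k))))).re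
    + (Matrix.trace ((W.submatrix id Sum.inr)ᴴ * Gz * (W.submatrix id Sum.inr))).re
    - 2 * Real.log ‖W.det‖

/-!
Write `J_W(W) = Q(W) - 2 log |det W|`. The quadratic part `Q` is positive definite and
homogeneous of degree two, so its minimum on the unit sphere gives `α‖W‖² ≤ Q(W)` with
`α > 0`, while `|det W| ≤ M! ‖W‖^M` makes `log |det W|` grow at most linearly. Hence
`J_W(W) ≥ α/2 ‖W‖² - c`. On the sublevel set `{J_W ≤ J_W(1)}` this bounds `‖W‖`, and
`Q ≥ 0` gives `|det W| ≥ exp(-J_W(1)/2)`; so the sublevel set lies in a compact set of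
invertible matrices on which `J_W` is continuous, and a minimum there is a global minimum.
-/

attribute [local instance] Matrix.normedAddCommGroup Matrix.normedSpace

section Homogeneous

variable {E : Type*} [NormedAddCommGroup E] [NormedSpace ℝ E] [ProperSpace E]

theorem exists_pos_mul_sq_norm_le_of_homogeneous {f : E → ℝ} (hf : Continuous f)
    (hsmul : ∀ (c : ℝ) x, f (c • x) = c ^ 2 * f x) (hpos : ∀ x, x ≠ 0 → 0 < f x) :
    ∃ α > 0, ∀ x, α * ‖x‖ ^ 2 ≤ f x := by
  have hf0 : f 0 = 0 := by simpa using hsmul 0 0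
  rcases subsingleton_or_nontrivial E with hE | hE
  · exact ⟨1, one_pos, fun x => by simp [Subsingleton.elim x 0, hf0]⟩
  obtain ⟨u, hu, hmin⟩ := (isCompact_sphere (0 : E) 1).exists_isMinOn
    (NormedSpace.sphere_nonempty.mpr zero_le_one) hf.continuousOn
  refine ⟨f u, hpos u (ne_zero_of_mem_unit_sphere ⟨u, hu⟩), fun x => ?_⟩
  rcases eq_or_ne x 0 with rfl | hx
  · simp [hf0]
  have hx' : 0 < ‖x‖ := norm_pos_iff.mpr hx
  have hunit : ‖x‖⁻¹ • x ∈ Metric.sphere (0 : E) 1 := by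
    simp [norm_smul, hx'.ne']
  calc f u * ‖x‖ ^ 2 ≤ f (‖x‖⁻¹ • x) * ‖x‖ ^ 2 := by gcongr; exact hmin hunit
    _ = f x := by rw [hsmul]; field_simp

end Homogeneous

theorem exists_isMinOn_of_sublevel_subset_isCompact {X β : Type*} [TopologicalSpace X]
    [LinearOrder β] [TopologicalSpace β] [ClosedIicTopology β] {f : X → β} {s T : Set X}
    {x₀ : X}
    (hT : IsCompact T) (hx₀ : x₀ ∈ T) (hf : ContinuousOn f T)
    (hsub : ∀ x ∈ s, f x ≤ f x₀ → x ∈ T) : ∃ x ∈ T, IsMinOn f s x := by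
  obtain ⟨x, hxT, hmin⟩ := hT.exists_isMinOn ⟨x₀, hx₀⟩ hf
  refine ⟨x, hxT, fun y hy => ?_⟩
  by_cases hy₀ : f y ≤ f x₀
  · exact hmin (hsub y hy hy₀)
  · exact (hmin hx₀).trans (not_le.mp hy₀).le

theorem Matrix.trace_conjTranspose_mul_mul {m n α : Type*} [Fintype m] [Fintype n]
    [NonUnitalCommSemiring α] [StarRing α] (A : Matrix m n α) (B : Matrix m m α) :
    (Aᴴ * B * A).trace = ∑ j, star (Aᵀ j) ⬝ᵥ B *ᵥ Aᵀ j := by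
  simp only [trace, diag, mul_apply, conjTranspose_apply, dotProduct, mulVec, transpose_apply,
    Pi.star_apply, Finset.sum_mul, Finset.mul_sum, mul_assoc]
  exact Finset.sum_congr rfl fun j _ => Finset.sum_comm

section ColumnForm

variable {𝕜 m n : Type*} [RCLike 𝕜] [Fintype m] [Fintype n]

noncomputable def sumColumnQuadForm (A : n → Matrix m m 𝕜) (W : Matrix m n 𝕜) : ℝ :=
  ∑ j, RCLike.re (star (Wᵀ j) ⬝ᵥ A j *ᵥ Wᵀ j)

theorem continuous_sumColumnQuadForm (A : n → Matrix m m 𝕜) :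
    Continuous (sumColumnQuadForm A) := by
  unfold sumColumnQuadForm
  fun_prop

theorem sumColumnQuadForm_smul (A : n → Matrix m m 𝕜) (c : ℝ) (W : Matrix m n 𝕜) :
    sumColumnQuadForm A (c • W) = c ^ 2 * sumColumnQuadForm A W := by
  simp only [sumColumnQuadForm, transpose_smul, Finset.mul_sum]
  refine Finset.sum_congr rfl fun j _ => ?_
  rw [show (c • Wᵀ) j = c • Wᵀ j from rfl]
  simp only [star_smul, star_trivial, mulVec_smul, dotProduct_smul,
    smul_dotProduct, smul_smul, RCLike.smul_re]
  ring

theorem sumColumnQuadForm_pos {A : n → Matrix m m 𝕜} (hA : ∀ j, (A j).PosDef)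
    {W : Matrix m n 𝕜} (hW : W ≠ 0) : 0 < sumColumnQuadForm A W := by
  obtain ⟨j, hj⟩ : ∃ j, Wᵀ j ≠ 0 := Function.ne_iff.mp (transpose_eq_zero.not.mpr hW)
  exact Finset.sum_pos' (fun i _ => (hA i).posSemidef.re_dotProduct_nonneg _)
    ⟨j, Finset.mem_univ j, (hA j).re_dotProduct_pos hj⟩

end ColumnForm

open Real

section LogDet

variable {𝕜 n : Type*} [Fintype n] [DecidableEq n]

theorem Matrix.norm_det_le_factorial_mul_norm_pow [NormedField 𝕜] (W : Matrix n n 𝕜) :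
    ‖W.det‖ ≤ (Fintype.card n).factorial * ‖W‖ ^ Fintype.card n := by
  have := det_le (A := W) (abv := NormedField.toAbsoluteValue 𝕜)
    fun i j => norm_entry_le_entrywise_sup_norm W
  rwa [nsmul_eq_mul] at this

theorem Matrix.log_norm_det_le [NormedField 𝕜] {W : Matrix n n 𝕜} (hW : W.det ≠ 0) :
    log ‖W.det‖ ≤ log (Fintype.card n).factorial + Fintype.card n * ‖W‖ := by
  have hbound := norm_det_le_factorial_mul_norm_pow W
  have hpos := (norm_pos_iff.mpr hW).trans_le hbound
  calc log ‖W.det‖ ≤ log ((Fintype.card n).factorial * ‖W‖ ^ Fintype.card n) :=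
        log_le_log (norm_pos_iff.mpr hW) hbound
    _ = log (Fintype.card n).factorial + Fintype.card n * log ‖W‖ := by
        rw [log_mul (left_ne_zero_of_mul hpos.ne') (right_ne_zero_of_mul hpos.ne'), log_pow]
    _ ≤ log (Fintype.card n).factorial + Fintype.card n * ‖W‖ := by
        gcongr; exact log_le_self (norm_nonneg W)

theorem Matrix.exists_sq_norm_sub_le_sub_two_mul_log_norm_det [NormedField 𝕜]
    {Q : Matrix n n 𝕜 → ℝ} {α : ℝ} (hα : 0 < α) (hQ : ∀ W, α * ‖W‖ ^ 2 ≤ Q W) :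
    ∃ c, ∀ W : Matrix n n 𝕜, W.det ≠ 0 → α / 2 * ‖W‖ ^ 2 - c ≤ Q W - 2 * log ‖W.det‖ := by
  set N : ℝ := (Fintype.card n : ℝ)
  refine ⟨2 * log (Fintype.card n).factorial + 2 * N ^ 2 / α, fun W hW => ?_⟩
  have hlin : 2 * N * ‖W‖ ≤ α / 2 * ‖W‖ ^ 2 + 2 * N ^ 2 / α := by
    have := sq_nonneg (α * ‖W‖ - 2 * N)
    rw [div_mul_eq_mul_div, div_add_div _ _ two_ne_zero hα.ne', le_div_iff₀ (by positivity)]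
    nlinarith
  linarith [hQ W, log_norm_det_le hW]

theorem Matrix.exists_isMinOn_sub_two_mul_log_norm_det [RCLike 𝕜] {Q : Matrix n n 𝕜 → ℝ}
    (hQc : Continuous Q) {α : ℝ} (hα : 0 < α) (hQ : ∀ W, α * ‖W‖ ^ 2 ≤ Q W) :
    ∃ W₀ : Matrix n n 𝕜, W₀.det ≠ 0 ∧
      IsMinOn (fun W => Q W - 2 * log ‖W.det‖) {W | W.det ≠ 0} W₀ := by
  set f := fun W : Matrix n n 𝕜 => Q W - 2 * log ‖W.det‖
  obtain ⟨c, hc⟩ := exists_sq_norm_sub_le_sub_two_mul_log_norm_det hα hQ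
  set B := f 1
  set δ := exp (-(B / 2))
  set T := Metric.closedBall 0 √(2 * (B + c) / α) ∩ {W : Matrix n n 𝕜 | δ ≤ ‖W.det‖}
  have hcont_det : Continuous fun W : Matrix n n 𝕜 => ‖W.det‖ := by fun_prop
  have hT : IsCompact T :=
    (isCompact_closedBall _ _).inter_right (isClosed_le continuous_const hcont_det)
  have hdet_pos : ∀ W ∈ T, 0 < ‖W.det‖ := fun W hW => (exp_pos _).trans_le hW.2
  have hsub : ∀ W ∈ {W : Matrix n n 𝕜 | W.det ≠ 0}, f W ≤ B → W ∈ T := by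
    intro W hW hWB
    refine ⟨mem_closedBall_zero_iff.mpr ?_, ?_⟩
    · have hcW := hc W hW
      exact Real.le_sqrt_of_sq_le (by rw [le_div_iff₀ hα]; nlinarith)
    · have hlog : -(B / 2) ≤ log ‖W.det‖ := by
        nlinarith [hQ W, sq_nonneg ‖W‖]
      exact (le_log_iff_exp_le (norm_pos_iff.mpr hW)).mp hlog
  have hf : ContinuousOn f T :=
    hQc.continuousOn.sub (continuousOn_const.mul
      (hcont_det.continuousOn.log fun W hW => (hdet_pos W hW).ne'))
  obtain ⟨W₀, hW₀, hmin⟩ :=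
    exists_isMinOn_of_sublevel_subset_isCompact hT (hsub 1 (by simp) le_rfl) hf hsub
  exact ⟨W₀, norm_pos_iff.mp (hdet_pos W₀ hW₀), hmin⟩

end LogDet

theorem JW_eq_sumColumnQuadForm {K L : ℕ}
    (G : Fin K → Matrix (Fin K ⊕ Fin L) (Fin K ⊕ Fin L) ℂ)
    (Gz : Matrix (Fin K ⊕ Fin L) (Fin K ⊕ Fin L) ℂ)
    (W : Matrix (Fin K ⊕ Fin L) (Fin K ⊕ Fin L) ℂ) :
    JW G Gz W = sumColumnQuadForm (Sum.elim G fun _ => Gz) W - 2 * log ‖W.det‖ := by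
  rw [JW, trace_conjTranspose_mul_mul, sumColumnQuadForm, Fintype.sum_sum_type,
    Complex.re_sum, Complex.re_sum]
  rfl

theorem JW_bddBelow_and_attains_min_general (K L : ℕ)
    (G : Fin K → Matrix (Fin K ⊕ Fin L) (Fin K ⊕ Fin L) ℂ)
    (Gz : Matrix (Fin K ⊕ Fin L) (Fin K ⊕ Fin L) ℂ)
    (hG : ∀ k, (G k).PosDef) (hGz : Gz.PosDef) :
    (∃ c : ℝ, ∀ W : Matrix (Fin K ⊕ Fin L) (Fin K ⊕ Fin L) ℂ,
        IsUnit W.det → c ≤ JW G Gz W) ∧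
    (∃ W₀ : Matrix (Fin K ⊕ Fin L) (Fin K ⊕ Fin L) ℂ, IsUnit W₀.det ∧
        ∀ W : Matrix (Fin K ⊕ Fin L) (Fin K ⊕ Fin L) ℂ,
          IsUnit W.det → JW G Gz W₀ ≤ JW G Gz W) := by
  have hA : ∀ j, (Sum.elim G (fun _ : Fin L => Gz) j).PosDef := by
    rintro (k | j)
    exacts [hG k, hGz]
  obtain ⟨α, hα, hQ⟩ := exists_pos_mul_sq_norm_le_of_homogeneous
    (continuous_sumColumnQuadForm _) (sumColumnQuadForm_smul _)
    fun W hW => sumColumnQuadForm_pos hA hW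
  obtain ⟨W₀, hW₀, hmin⟩ :=
    exists_isMinOn_sub_two_mul_log_norm_det (continuous_sumColumnQuadForm _) hα hQ
  have hJW : ∀ W, IsUnit W.det → JW G Gz W₀ ≤ JW G Gz W := fun W hW => by
    rw [JW_eq_sumColumnQuadForm, JW_eq_sumColumnQuadForm]
    exact hmin hW.ne_zero
  exact ⟨⟨_, hJW⟩, W₀, hW₀.isUnit, hJW⟩

/-- If `G_1, …, G_K, G_z` are positive definite (Hermitian) `M×M` complex matrices,
then `J_W` is bounded from below on the set of invertible matrices and
attains its minimum at some invertible matrix. -/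
theorem JW_bddBelow_and_attains_min (K L : ℕ) (hK : 1 ≤ K) (hL : 1 ≤ L)
    (G : Fin K → Matrix (Fin K ⊕ Fin L) (Fin K ⊕ Fin L) ℂ)
    (Gz : Matrix (Fin K ⊕ Fin L) (Fin K ⊕ Fin L) ℂ)
    (hG : ∀ k, (G k).PosDef) (hGz : Gz.PosDef) :
    (∃ c : ℝ, ∀ W : Matrix (Fin K ⊕ Fin L) (Fin K ⊕ Fin L) ℂ,
        IsUnit W.det → c ≤ JW G Gz W) ∧
    (∃ W₀ : Matrix (Fin K ⊕ Fin L) (Fin K ⊕ Fin L) ℂ, IsUnit W₀.det ∧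
        ∀ W : Matrix (Fin K ⊕ Fin L) (Fin K ⊕ Fin L) ℂ,
          IsUnit W.det → JW G Gz W₀ ≤ JW G Gz W) :=
  JW_bddBelow_and_attains_min_general K L G Gz hG hGz
end

section
/- Suppose G_z is a positive definite Hermitian M×M complex matrix, and let W⁰ = [W_s, W_z⁰] be an invertible M×M complex matrix with W_s ∈ ℂ^{M×K} its first K columns. Define U_z = ((W⁰)^H G_z)^{−1} E_z ∈ ℂ^{M×(M−K)}. Then U_z^H G_z U_z is positive definite, and a matrix W_z ∈ ℂ^{M×(M−K)} satisfies the stationary condition [W_s, W_z]^H G_z W_z = E_z if and only if there exists a unitary matrix Q ∈ ℂ^{(M−K)×(M−K)} such that W_z = U_z (U_z^H G_z U_z)^{−1/2} Q. -/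
/-!
Put `A = W⁰ᴴ G_z`, so that `U_z = A⁻¹ E_z` and `W_sᴴ G_z` consists of the first `K` rows of `A`.
Hence `W_sᴴ G_z W_z = 0` says exactly that `A W_z` vanishes outside its last `L` rows, i.e. that
`W_z = U_z C` for some `C`. The remaining condition `W_zᴴ G_z W_z = 1` then reads
`Cᴴ S² C = 1`, i.e. `Q = S C` is unitary. Positivity of `U_zᴴ G_z U_z` holds because `U_z`
has the left inverse `E_zᴴ A`.
-/

open Matrix
open scoped ComplexOrder

/-- `E_z = [e_{K+1}, …, e_M]`. -/
def Ez (K L : ℕ) : Matrix (Fin K ⊕ Fin L) (Fin L) ℂ :=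
  Matrix.of fun i j => if i = Sum.inr j then 1 else 0

namespace Matrix

variable {m n p R : Type*} [Fintype m] [Fintype n]

lemma mulVec_injective_of_mul_eq_one [CommSemiring R] [DecidableEq n] {B : Matrix n m R}
    {U : Matrix m n R} (h : B * U = 1) : Function.Injective U.mulVec := fun x y hxy => by
  simpa only [mulVec_mulVec, h, one_mulVec] using congrArg (B *ᵥ ·) hxy

lemma toRows₁_mul [NonUnitalNonAssocSemiring R] (A : Matrix (m ⊕ n) (m ⊕ n) R)
    (X : Matrix (m ⊕ n) p R) : (A * X).toRows₁ = A.toRows₁ * X :=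
  rfl

lemma conjTranspose_mul_mul_mul_same [CommSemiring R] [StarRing R] (G : Matrix m m R)
    (U : Matrix m n R) (C : Matrix n p R) :
    (U * C)ᴴ * G * (U * C) = Cᴴ * (Uᴴ * G * U) * C := by
  simp only [conjTranspose_mul, Matrix.mul_assoc]

variable [DecidableEq n]

lemma toRows₁_mul_eq_zero_iff [DecidableEq m] [CommRing R] {A : Matrix (m ⊕ n) (m ⊕ n) R}
    (hA : IsUnit A.det) (X : Matrix (m ⊕ n) p R) :
    (A * X).toRows₁ = 0 ↔
      ∃ C : Matrix n p R, X = A⁻¹ * (fromRows 0 1 : Matrix (m ⊕ n) n R) * C := by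
  constructor
  · intro h
    refine ⟨(A * X).toRows₂, ?_⟩
    rw [Matrix.mul_assoc, fromRows_mul, Matrix.zero_mul, Matrix.one_mul, ← h, fromRows_toRows,
      ← Matrix.mul_assoc, nonsing_inv_mul _ hA, Matrix.one_mul]
  · rintro ⟨C, rfl⟩
    rw [← Matrix.mul_assoc, ← Matrix.mul_assoc, mul_nonsing_inv _ hA, Matrix.one_mul,
      fromRows_mul, Matrix.zero_mul, Matrix.one_mul, toRows₁_fromRows]

section Unitary

variable [CommRing R] [StarRing R] {S : Matrix n n R}

lemma conjTranspose_mul_sq_mul_eq_one_iff (hS : S.IsHermitian) (hSdet : IsUnit S.det)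
    (C : Matrix n n R) :
    Cᴴ * (S * S) * C = 1 ↔ ∃ Q : Matrix n n R, Qᴴ * Q = 1 ∧ Q * Qᴴ = 1 ∧ C = S⁻¹ * Q := by
  constructor
  · intro h
    have hQ : (S * C)ᴴ * (S * C) = 1 := by
      rwa [conjTranspose_mul, hS.eq, Matrix.mul_assoc, ← Matrix.mul_assoc S, ← Matrix.mul_assoc]
    refine ⟨S * C, hQ, mul_eq_one_comm.mp hQ, ?_⟩
    rw [← Matrix.mul_assoc, nonsing_inv_mul _ hSdet, Matrix.one_mul]
  · rintro ⟨Q, hQ, -, rfl⟩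
    have hSinv : (S⁻¹)ᴴ = S⁻¹ := by rw [conjTranspose_nonsing_inv, hS.eq]
    calc (S⁻¹ * Q)ᴴ * (S * S) * (S⁻¹ * Q) = Qᴴ * ((S⁻¹ * S) * (S * S⁻¹)) * Q := by
          simp only [conjTranspose_mul, hSinv, Matrix.mul_assoc]
      _ = 1 := by rw [nonsing_inv_mul _ hSdet, mul_nonsing_inv _ hSdet, Matrix.mul_one,
          Matrix.mul_one, hQ]

lemma exists_eq_mul_and_gram_eq_one_iff {G : Matrix m m R} {U : Matrix m n R}
    (hS : S.IsHermitian) (hSdet : IsUnit S.det) (hSS : S * S = Uᴴ * G * U) (W : Matrix m n R) :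
    ((∃ C : Matrix n n R, W = U * C) ∧ Wᴴ * G * W = 1) ↔
      ∃ Q : Matrix n n R, Qᴴ * Q = 1 ∧ Q * Qᴴ = 1 ∧ W = U * S⁻¹ * Q := by
  constructor
  · rintro ⟨⟨C, rfl⟩, h⟩
    rw [conjTranspose_mul_mul_mul_same, ← hSS, conjTranspose_mul_sq_mul_eq_one_iff hS hSdet] at h
    obtain ⟨Q, hQ, hQ', rfl⟩ := h
    exact ⟨Q, hQ, hQ', (Matrix.mul_assoc _ _ _).symm⟩
  · rintro ⟨Q, hQ, hQ', rfl⟩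
    refine ⟨⟨S⁻¹ * Q, Matrix.mul_assoc _ _ _⟩, ?_⟩
    rw [Matrix.mul_assoc U, conjTranspose_mul_mul_mul_same, ← hSS,
      conjTranspose_mul_sq_mul_eq_one_iff hS hSdet]
    exact ⟨Q, hQ, hQ', rfl⟩

end Unitary

end Matrix

lemma Ez_eq_fromRows (K L : ℕ) : Ez K L = fromRows 0 1 := by
  ext (i | i) j <;> simp [Ez, one_apply]

lemma conjTranspose_Ez_mul_Ez (K L : ℕ) : (Ez K L)ᴴ * Ez K L = 1 := by
  simp [Ez_eq_fromRows, conjTranspose_fromRows_eq_fromCols_conjTranspose, fromCols_mul_fromRows]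

lemma fromCols_conjTranspose_mul_eq_Ez_iff {K L : ℕ} {p : Type*} [Fintype p]
    (A : Matrix p (Fin K) ℂ) (B : Matrix p (Fin L) ℂ) (G : Matrix p p ℂ) :
    (fromCols A B)ᴴ * G * B = Ez K L ↔ Aᴴ * G * B = 0 ∧ Bᴴ * G * B = 1 := by
  rw [conjTranspose_fromCols_eq_fromRows_conjTranspose, fromRows_mul, fromRows_mul,
    Ez_eq_fromRows, fromRows_ext_iff]

theorem stationary_Wz_iff_general (K L : ℕ)
    (Gz : Matrix (Fin K ⊕ Fin L) (Fin K ⊕ Fin L) ℂ) (hGz : Gz.PosDef)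
    (W0 : Matrix (Fin K ⊕ Fin L) (Fin K ⊕ Fin L) ℂ) (hW0 : IsUnit W0.det)
    (Ws : Matrix (Fin K ⊕ Fin L) (Fin K) ℂ) (hWs : Ws = W0.submatrix id Sum.inl)
    (Uz : Matrix (Fin K ⊕ Fin L) (Fin L) ℂ) (hUz : Uz = (W0ᴴ * Gz)⁻¹ * Ez K L) :
    (Uzᴴ * Gz * Uz).PosDef ∧
    ∀ S : Matrix (Fin L) (Fin L) ℂ, S.PosDef → S * S = Uzᴴ * Gz * Uz →
      ∀ Wz : Matrix (Fin K ⊕ Fin L) (Fin L) ℂ,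
        ((Matrix.fromCols Ws Wz)ᴴ * Gz * Wz = Ez K L ↔
          ∃ Q : Matrix (Fin L) (Fin L) ℂ,
            Qᴴ * Q = 1 ∧ Q * Qᴴ = 1 ∧ Wz = Uz * S⁻¹ * Q) := by
  have hA : IsUnit (W0ᴴ * Gz).det := by
    rw [det_mul, det_conjTranspose]
    exact hW0.star.mul hGz.det_pos.ne'.isUnit
  have hUz_left : ((Ez K L)ᴴ * (W0ᴴ * Gz)) * Uz = 1 := by
    rw [hUz, Matrix.mul_assoc, ← Matrix.mul_assoc _ _ (Ez K L), mul_nonsing_inv _ hA,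
      Matrix.one_mul, conjTranspose_Ez_mul_Ez]
  refine ⟨hGz.conjTranspose_mul_mul_same (mulVec_injective_of_mul_eq_one hUz_left),
    fun S hS hSS Wz => ?_⟩
  have hWs_rows : Wsᴴ = W0ᴴ.toRows₁ := by rw [hWs]; rfl
  have horth : Wsᴴ * Gz * Wz = 0 ↔ ∃ C, Wz = Uz * C := by
    rw [hWs_rows, ← toRows₁_mul, ← toRows₁_mul, hUz, Ez_eq_fromRows]
    exact toRows₁_mul_eq_zero_iff hA Wz
  rw [fromCols_conjTranspose_mul_eq_Ez_iff, horth]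
  exact exists_eq_mul_and_gram_eq_one_iff hS.isHermitian hS.det_pos.ne'.isUnit hSS Wz

/-- Given `U_z = ((W⁰)ᴴ G_z)⁻¹ E_z`, the matrix `U_zᴴ G_z U_z` is positive definite,
and `W_z` satisfies the stationary condition `[W_s, W_z]ᴴ G_z W_z = E_z`
iff `W_z = U_z (U_zᴴ G_z U_z)^{−1/2} Q` for some unitary `Q`. -/
theorem stationary_Wz_iff (K L : ℕ) (hK : 1 ≤ K) (hL : 1 ≤ L)
    (Gz : Matrix (Fin K ⊕ Fin L) (Fin K ⊕ Fin L) ℂ) (hGz : Gz.PosDef)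
    (W0 : Matrix (Fin K ⊕ Fin L) (Fin K ⊕ Fin L) ℂ) (hW0 : IsUnit W0.det)
    (Ws : Matrix (Fin K ⊕ Fin L) (Fin K) ℂ) (hWs : Ws = W0.submatrix id Sum.inl)
    (Uz : Matrix (Fin K ⊕ Fin L) (Fin L) ℂ) (hUz : Uz = (W0ᴴ * Gz)⁻¹ * Ez K L) :
    (Uzᴴ * Gz * Uz).PosDef ∧
    ∀ S : Matrix (Fin L) (Fin L) ℂ, S.PosDef → S * S = Uzᴴ * Gz * Uz →
      ∀ Wz : Matrix (Fin K ⊕ Fin L) (Fin L) ℂ,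
        ((Matrix.fromCols Ws Wz)ᴴ * Gz * Wz = Ez K L ↔
          ∃ Q : Matrix (Fin L) (Fin L) ℂ,
            Qᴴ * Q = 1 ∧ Q * Qᴴ = 1 ∧ Wz = Uz * S⁻¹ * Q) :=
  stationary_Wz_iff_general K L Gz hGz W0 hW0 Ws hWs Uz hUz
end

section
/- Suppose G_1, …, G_K and G_z are positive definite Hermitian M×M complex matrices, and let W⁰ = [W_s, W_z⁰] be an invertible M×M complex matrix with W_s ∈ ℂ^{M×K} its first K columns. Define U_z = ((W⁰)^H G_z)^{−1} E_z. Then for every unitary matrix Q ∈ ℂ^{(M−K)×(M−K)}, the matrix W_z* = U_z (U_z^H G_z U_z)^{−1/2} Q makes [W_s, W_z*] invertible and globally minimizes the function W_z ↦ J_W([W_s, W_z]) over all W_z ∈ ℂ^{M×(M−K)} such that [W_s, W_z] is invertible. -/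
/- STATEMENT 3.
M×M complex matrices are encoded as matrices indexed by `Fin K ⊕ Fin L`,
where `M = K + L`, `K ≥ 1`, `L = M - K ≥ 1`. The first `K` columns (`Sum.inl`)
form `W_s`; the last `L` columns (`Sum.inr`) form `W_z`; `[W_s, W_z]` is
`Matrix.fromColumns W_s W_z`. For a positive definite Hermitian `B`, `B^{−1/2}`
is represented as `S⁻¹` where `S` is the unique positive definite matrix with
`S * S = B` (the statement is quantified over all such `S`). -/

open Matrix
open scoped ComplexOrder

/-!
Since `W_s` are the first columns of `W⁰`, the matrix `(W⁰)⁻¹ [W_s, W_z]` is block upper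
triangular, so `det [W_s, W_z] = det W⁰ · det (E_zᴴ (W⁰)⁻¹ W_z)`, and `E_zᴴ (W⁰)⁻¹ = U_zᴴ G_z`.
The whitened frame `V = U_z S⁻¹` is `G_z`-orthonormal and `U_zᴴ G_z = S Vᴴ G_z`, so up to a
constant the cost is `tr (W_zᴴ G_z W_z) - 2 log |det P|` with `P = Vᴴ G_z W_z`. Bessel's
inequality bounds the trace below by `tr (Pᴴ P)`, and `log t ≤ t - 1` on the eigenvalues of
`Pᴴ P` gives `tr (Pᴴ P) - 2 log |det P| ≥ L`, with equality for `W_z = V Q`.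
-/

open Real

namespace Matrix

variable {m n l R : Type*}

theorem det_fromCols_submatrix_inl_of_isUnit [Fintype m] [Fintype n] [DecidableEq m]
    [DecidableEq n] [CommRing R]
    (A : Matrix (m ⊕ n) (m ⊕ n) R) (hA : IsUnit A.det) (B : Matrix (m ⊕ n) n R) :
    (fromCols (A.submatrix id Sum.inl) B).det =
      A.det * ((A⁻¹ * B).submatrix Sum.inr id).det := by
  set X := A⁻¹ * B
  have hfac : A * fromBlocks 1 (X.submatrix Sum.inl id) 0 (X.submatrix Sum.inr id) =
      fromCols (A.submatrix id Sum.inl) B := by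
    calc _ = fromCols A.toCols₁ A.toCols₂ *
          fromRows (fromCols 1 X.toRows₁) (fromCols 0 X.toRows₂) := by
          rw [fromCols_toCols, fromRows_fromCols_eq_fromBlocks]; rfl
      _ = fromCols A.toCols₁ (A * X) := by
          rw [fromRows_fromCols_eq_fromBlocks, fromCols_mul_fromBlocks,
            ← fromCols_mul_fromRows A.toCols₁ A.toCols₂ X.toRows₁, fromRows_toRows,
            fromCols_toCols, Matrix.mul_one, Matrix.mul_zero, add_zero]
      _ = _ := by rw [mul_nonsing_inv_cancel_left A B hA]; rfl
  rw [← hfac, det_mul, det_fromBlocks_zero₂₁, det_one, one_mul]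

theorem conjTranspose_inv_mul_mul_eq [Fintype m] [DecidableEq m] [CommRing R] [StarRing R]
    (A : Matrix m m R) {G : Matrix m m R} (hG : G.IsHermitian) (hGu : IsUnit G.det)
    (E : Matrix m n R) :
    ((Aᴴ * G)⁻¹ * E)ᴴ * G = Eᴴ * A⁻¹ := by
  rw [conjTranspose_mul, conjTranspose_nonsing_inv, conjTranspose_mul,
    conjTranspose_conjTranspose, hG.eq, mul_inv_rev, Matrix.mul_assoc, Matrix.mul_assoc,
    nonsing_inv_mul _ hGu, Matrix.mul_one]

section Whitening

variable [Fintype l] [DecidableEq l] [CommRing R] [StarRing R] {S : Matrix l l R}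

theorem mul_conjTranspose_mul_inv (hS : S.IsHermitian) (hSu : IsUnit S.det) (U : Matrix m l R) :
    S * (U * S⁻¹)ᴴ = Uᴴ := by
  rw [conjTranspose_mul, conjTranspose_nonsing_inv, hS.eq, mul_nonsing_inv_cancel_left _ _ hSu]

theorem conjTranspose_mul_inv_mul_mul_inv [Fintype m] (hS : S.IsHermitian) (hSu : IsUnit S.det)
    {U : Matrix m l R} {G : Matrix m m R} (hSS : S * S = Uᴴ * G * U) :
    (U * S⁻¹)ᴴ * G * (U * S⁻¹) = 1 := by
  calc (U * S⁻¹)ᴴ * G * (U * S⁻¹) = S⁻¹ * (S * S) * S⁻¹ := by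
        rw [hSS, conjTranspose_mul, conjTranspose_nonsing_inv, hS.eq]
        simp only [Matrix.mul_assoc]
    _ = 1 := by
        rw [nonsing_inv_mul_cancel_left _ _ hSu, mul_nonsing_inv _ hSu]

end Whitening

theorem card_add_two_mul_log_norm_det_le_re_trace [Fintype n] [DecidableEq n] (P : Matrix n n ℂ)
    (hP : P.det ≠ 0) :
    (Fintype.card n : ℝ) + 2 * log ‖P.det‖ ≤ (Pᴴ * P).trace.re := by
  have hPP : (Pᴴ * P).PosDef := .conjTranspose_mul_self P <|
    mulVec_injective_iff_isUnit.2 <| (isUnit_iff_isUnit_det P).2 hP.isUnit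
  set ev := hPP.isHermitian.eigenvalues
  have hsq : ‖P.det‖ ^ 2 = ∏ i, ev i := by
    have hdet : (Pᴴ * P).det = ∏ i, (ev i : ℂ) := hPP.isHermitian.det_eq_prod_eigenvalues
    have : ((‖P.det‖ ^ 2 : ℝ) : ℂ) = ((∏ i, ev i : ℝ) : ℂ) := by
      rw [Complex.ofReal_prod, ← hdet, det_mul, det_conjTranspose]
      push_cast
      exact (RCLike.conj_mul _).symm
    exact_mod_cast this
  have hlog : 2 * log ‖P.det‖ = ∑ i, log (ev i) := by
    rw [← log_prod fun i _ => (hPP.eigenvalues_pos i).ne', ← hsq, log_pow]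
    push_cast
    ring
  have htr : (Pᴴ * P).trace.re = ∑ i, ev i := by
    simp [hPP.isHermitian.trace_eq_sum_eigenvalues, Complex.re_sum, ev]
  rw [hlog, htr, ← Finset.card_univ, Finset.cast_card, ← Finset.sum_add_distrib]
  exact Finset.sum_le_sum fun i _ => by
    linarith [log_le_sub_one_of_pos (hPP.eigenvalues_pos i)]

section Orthonormal

variable [Fintype m] [Fintype l] [DecidableEq l] {G : Matrix m m ℂ} (hG : G.PosSemidef)
  {V : Matrix m l ℂ} (hV : Vᴴ * G * V = 1)
include hG hV

-- Bessel's inequality for the `G`-orthonormal columns of `V`.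
theorem re_trace_conjTranspose_mul_mul_le [Fintype n] (W : Matrix m n ℂ) :
    ((Vᴴ * G * W)ᴴ * (Vᴴ * G * W)).trace.re ≤ (Wᴴ * G * W).trace.re := by
  set P := Vᴴ * G * W with hP
  have hRW : (V * P)ᴴ * G * W = Pᴴ * P := by
    simp only [hP, conjTranspose_mul, Matrix.mul_assoc]
  have hWR : Wᴴ * G * (V * P) = Pᴴ * P := by
    simp only [hP, conjTranspose_mul, conjTranspose_conjTranspose, hG.isHermitian.eq,
      Matrix.mul_assoc]
  have hRR : (V * P)ᴴ * G * (V * P) = Pᴴ * P := by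
    calc (V * P)ᴴ * G * (V * P) = Pᴴ * (Vᴴ * G * V) * P := by
          simp only [conjTranspose_mul, Matrix.mul_assoc]
      _ = Pᴴ * P := by rw [hV, Matrix.mul_one]
  have hsplit : Wᴴ * G * W = (W - V * P)ᴴ * G * (W - V * P) + Pᴴ * P := by
    simp only [conjTranspose_sub, Matrix.sub_mul, Matrix.mul_sub, hRW, hWR, hRR]
    abel
  have hnonneg := (hG.conjTranspose_mul_mul_same (W - V * P)).trace_nonneg
  rw [hsplit, trace_add, Complex.add_re]
  linarith [(Complex.nonneg_iff.1 hnonneg).1]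

theorem re_trace_sub_two_mul_log_norm_det_le {Q : Matrix l l ℂ} (hQ : Qᴴ * Q = 1)
    (W : Matrix m l ℂ) (hW : (Vᴴ * G * W).det ≠ 0) :
    ((V * Q)ᴴ * G * (V * Q)).trace.re - 2 * log ‖(Vᴴ * G * (V * Q)).det‖ ≤
      (Wᴴ * G * W).trace.re - 2 * log ‖(Vᴴ * G * W).det‖ := by
  have hVQ : Vᴴ * G * (V * Q) = Q := by rw [← Matrix.mul_assoc, hV, Matrix.one_mul]
  have hQQ : (V * Q)ᴴ * G * (V * Q) = 1 := by
    rw [conjTranspose_mul, Matrix.mul_assoc, Matrix.mul_assoc, ← Matrix.mul_assoc Vᴴ, hVQ, hQ]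
  have hQdet : ‖Q.det‖ = 1 :=
    CStarRing.norm_of_mem_unitary (det_of_mem_unitary (mem_unitaryGroup_iff'.2 hQ))
  rw [hVQ, hQQ, hQdet, trace_one, log_one]
  have hlogdet := card_add_two_mul_log_norm_det_le_re_trace _ hW
  have hbessel := re_trace_conjTranspose_mul_mul_le hG hV W
  simp only [Complex.natCast_re]
  linarith

end Orthonormal

end Matrix

theorem Ez_conjTranspose_mul {K L : ℕ} {n : Type*} [Fintype n]
    (A : Matrix (Fin K ⊕ Fin L) n ℂ) : (Ez K L)ᴴ * A = A.submatrix Sum.inr id := by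
  ext j c
  simp [mul_apply, Ez, conjTranspose_apply, apply_ite, ite_mul]

theorem JW_fromCols {K L : ℕ} (G : Fin K → Matrix (Fin K ⊕ Fin L) (Fin K ⊕ Fin L) ℂ)
    (Gz : Matrix (Fin K ⊕ Fin L) (Fin K ⊕ Fin L) ℂ)
    (Ws : Matrix (Fin K ⊕ Fin L) (Fin K) ℂ)
    (Wz : Matrix (Fin K ⊕ Fin L) (Fin L) ℂ) :
    JW G Gz (fromCols Ws Wz) =
      (∑ k, star (fun i => Ws i k) ⬝ᵥ (G k *ᵥ fun i => Ws i k)).re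
        + (Wzᴴ * Gz * Wz).trace.re - 2 * log ‖(fromCols Ws Wz).det‖ :=
  rfl

theorem det_fromCols_eq_det_mul_det {K L : ℕ}
    (W0 : Matrix (Fin K ⊕ Fin L) (Fin K ⊕ Fin L) ℂ)
    (hW0 : IsUnit W0.det) {Gz : Matrix (Fin K ⊕ Fin L) (Fin K ⊕ Fin L) ℂ} (hGz : Gz.PosDef)
    (Wz : Matrix (Fin K ⊕ Fin L) (Fin L) ℂ) :
    (fromCols (W0.submatrix id Sum.inl) Wz).det =
      W0.det * (((W0ᴴ * Gz)⁻¹ * Ez K L)ᴴ * Gz * Wz).det := by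
  rw [det_fromCols_submatrix_inl_of_isUnit W0 hW0,
    conjTranspose_inv_mul_mul_eq W0 hGz.isHermitian ((isUnit_iff_isUnit_det _).1 hGz.isUnit),
    Matrix.mul_assoc, Ez_conjTranspose_mul]

theorem update_Wz_global_min_general (K L : ℕ)
    (G : Fin K → Matrix (Fin K ⊕ Fin L) (Fin K ⊕ Fin L) ℂ)
    (Gz : Matrix (Fin K ⊕ Fin L) (Fin K ⊕ Fin L) ℂ)
    (hGz : Gz.PosDef)
    (W0 : Matrix (Fin K ⊕ Fin L) (Fin K ⊕ Fin L) ℂ) (hW0 : IsUnit W0.det)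
    (Ws : Matrix (Fin K ⊕ Fin L) (Fin K) ℂ) (hWs : Ws = W0.submatrix id Sum.inl)
    (Uz : Matrix (Fin K ⊕ Fin L) (Fin L) ℂ) (hUz : Uz = (W0ᴴ * Gz)⁻¹ * Ez K L) :
    ∀ S : Matrix (Fin L) (Fin L) ℂ, S.PosDef → S * S = Uzᴴ * Gz * Uz →
      ∀ Q : Matrix (Fin L) (Fin L) ℂ, Qᴴ * Q = 1 → Q * Qᴴ = 1 →
        IsUnit (Matrix.fromCols Ws (Uz * S⁻¹ * Q)).det ∧
        ∀ Wz : Matrix (Fin K ⊕ Fin L) (Fin L) ℂ,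
          IsUnit (Matrix.fromCols Ws Wz).det →
            JW G Gz (Matrix.fromCols Ws (Uz * S⁻¹ * Q)) ≤
              JW G Gz (Matrix.fromCols Ws Wz) := by
  intro S hS hSS Q hQ _
  have hSu : IsUnit S.det := (isUnit_iff_isUnit_det S).1 hS.isUnit
  set V := Uz * S⁻¹
  have hV : Vᴴ * Gz * V = 1 := conjTranspose_mul_inv_mul_mul_inv hS.isHermitian hSu hSS
  have hdet (Wz) : (fromCols Ws Wz).det = W0.det * S.det * (Vᴴ * Gz * Wz).det := by
    rw [hWs, det_fromCols_eq_det_mul_det W0 hW0 hGz, ← hUz,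
      ← mul_conjTranspose_mul_inv hS.isHermitian hSu Uz, Matrix.mul_assoc S,
      Matrix.mul_assoc S, det_mul, mul_assoc, Matrix.mul_assoc]
  have hVQ : Vᴴ * Gz * (V * Q) = Q := by rw [← Matrix.mul_assoc, hV, Matrix.one_mul]
  have hQu : IsUnit Q.det := isUnit_det_of_left_inverse hQ
  have hc : ‖W0.det * S.det‖ ≠ 0 := norm_ne_zero_iff.2 (hW0.mul hSu).ne_zero
  refine ⟨by rw [hdet, hVQ]; exact (hW0.mul hSu).mul hQu, fun Wz hWz => ?_⟩
  have hP : (Vᴴ * Gz * Wz).det ≠ 0 := right_ne_zero_of_mul (hdet Wz ▸ hWz.ne_zero)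
  have hQ0 : ‖(Vᴴ * Gz * (V * Q)).det‖ ≠ 0 := by
    rw [hVQ]; exact norm_ne_zero_iff.2 hQu.ne_zero
  rw [JW_fromCols, JW_fromCols, hdet, hdet, norm_mul _ (Vᴴ * Gz * Wz).det, norm_mul,
    log_mul hc (norm_ne_zero_iff.2 hP), log_mul hc hQ0]
  linarith [re_trace_sub_two_mul_log_norm_det_le hGz.posSemidef hV hQ Wz hP]

/-- With `U_z = ((W⁰)ᴴ G_z)⁻¹ E_z`, for every unitary `Q` the matrix
`W_z* = U_z (U_zᴴ G_z U_z)^{−1/2} Q` makes `[W_s, W_z*]` invertible and globally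
minimizes `W_z ↦ J_W([W_s, W_z])` over all `W_z` with `[W_s, W_z]` invertible. -/
theorem update_Wz_global_min (K L : ℕ) (hK : 1 ≤ K) (hL : 1 ≤ L)
    (G : Fin K → Matrix (Fin K ⊕ Fin L) (Fin K ⊕ Fin L) ℂ)
    (Gz : Matrix (Fin K ⊕ Fin L) (Fin K ⊕ Fin L) ℂ)
    (hG : ∀ k, (G k).PosDef) (hGz : Gz.PosDef)
    (W0 : Matrix (Fin K ⊕ Fin L) (Fin K ⊕ Fin L) ℂ) (hW0 : IsUnit W0.det)
    (Ws : Matrix (Fin K ⊕ Fin L) (Fin K) ℂ) (hWs : Ws = W0.submatrix id Sum.inl)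
    (Uz : Matrix (Fin K ⊕ Fin L) (Fin L) ℂ) (hUz : Uz = (W0ᴴ * Gz)⁻¹ * Ez K L) :
    ∀ S : Matrix (Fin L) (Fin L) ℂ, S.PosDef → S * S = Uzᴴ * Gz * Uz →
      ∀ Q : Matrix (Fin L) (Fin L) ℂ, Qᴴ * Q = 1 → Q * Qᴴ = 1 →
        IsUnit (Matrix.fromCols Ws (Uz * S⁻¹ * Q)).det ∧
        ∀ Wz : Matrix (Fin K ⊕ Fin L) (Fin L) ℂ,
          IsUnit (Matrix.fromCols Ws Wz).det →
            JW G Gz (Matrix.fromCols Ws (Uz * S⁻¹ * Q)) ≤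
              JW G Gz (Matrix.fromCols Ws Wz) :=
  update_Wz_global_min_general K L G Gz hGz W0 hW0 Ws hWs Uz hUz
end

section
/- Let K = 1 and M ≥ 2, and suppose G_1 and G_z are positive definite Hermitian M×M complex matrices. Let u_1 ∈ ℂ^M be nonzero with G_z u_1 = λ G_1 u_1 for some real λ, and let U_z ∈ ℂ^{M×(M−1)} satisfy U_z^H G_z u_1 = 0 with U = [u_1, U_z] invertible. Set w_1 = u_1 (u_1^H G_1 u_1)^{−1/2}, W_z = U_z (U_z^H G_z U_z)^{−1/2}, and W = [w_1, W_z]. Then λ > 0 and |det W| = √λ · (det G_z)^{−1/2}, where det G_z is a positive real number. -/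
/-! The column `w₁` of `W` is orthogonal to `W_z` in the `G_z`-inner product, `W_z` is
`G_z`-orthonormal by the choice of `S`, and the normalisation of `w₁` together with
`G_z u₁ = λ G₁ u₁` gives `w₁ᴴ G_z w₁ = λ`. Hence `Wᴴ G_z W` is block upper triangular with
diagonal blocks `λ` and `1`, and taking determinants gives `|det W|² det G_z = λ`.
Positivity of `λ` comes from `u₁ᴴ G_z u₁ = λ u₁ᴴ G₁ u₁` with both quadratic forms positive. -/

open Matrix
open scoped ComplexOrder

namespace Matrix

section Blocks

variable {R m n₁ n₂ : Type*} [Fintype m]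

theorem conjTranspose_fromCols_mul_mul_fromCols [Semiring R] [StarRing R]
    (X : Matrix m n₁ R) (Y : Matrix m n₂ R) (G : Matrix m m R) :
    (fromCols X Y)ᴴ * G * fromCols X Y =
      fromBlocks (Xᴴ * G * X) (Xᴴ * G * Y) (Yᴴ * G * X) (Yᴴ * G * Y) := by
  rw [conjTranspose_fromCols_eq_fromRows_conjTranspose, fromRows_mul, fromRows_mul_fromCols]

theorem conjTranspose_replicateCol_mul_mul_replicateCol [Semiring R] [StarRing R]
    (ι : Type*) (v : m → R) (G : Matrix m m R) :
    (replicateCol ι v)ᴴ * G * replicateCol ι v = of fun _ _ => star v ⬝ᵥ (G *ᵥ v) := by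
  rw [conjTranspose_replicateCol, Matrix.mul_assoc, ← replicateCol_mulVec,
    replicateRow_mul_replicateCol]

theorem conjTranspose_mul_mul_eq_one_of_mul_self_eq [CommRing R] [StarRing R]
    [Fintype n₁] [DecidableEq n₁]
    {U : Matrix m n₁ R} {G : Matrix m m R} {S : Matrix n₁ n₁ R} (hS : S.IsHermitian)
    (hdet : IsUnit S.det) (hSS : S * S = Uᴴ * G * U) :
    (U * S⁻¹)ᴴ * G * (U * S⁻¹) = 1 := by
  calc (U * S⁻¹)ᴴ * G * (U * S⁻¹) = S⁻¹ * (Uᴴ * G * U) * S⁻¹ := by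
        rw [conjTranspose_mul, conjTranspose_nonsing_inv, hS.eq]; simp only [Matrix.mul_assoc]
    _ = (S⁻¹ * S) * (S * S⁻¹) := by rw [← hSS]; simp only [Matrix.mul_assoc]
    _ = 1 := by rw [nonsing_inv_mul S hdet, mul_nonsing_inv S hdet, Matrix.mul_one]

end Blocks

variable {𝕜 n : Type*} [RCLike 𝕜] [Fintype n]

theorem PosDef.pos_of_mulVec_eq_smul_mulVec {A B : Matrix n n 𝕜}
    (hA : A.PosDef) (hB : B.PosDef) {v : n → 𝕜} (hv : v ≠ 0) {μ : ℝ}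
    (h : A *ᵥ v = (μ : 𝕜) • (B *ᵥ v)) : 0 < μ := by
  obtain ⟨p, hp, hpB⟩ := RCLike.pos_iff_exists_ofReal.mp (hB.dotProduct_mulVec_pos hv)
  have hA := hA.dotProduct_mulVec_pos hv
  rw [h, dotProduct_smul, ← hpB, smul_eq_mul, ← RCLike.ofReal_mul, RCLike.ofReal_pos] at hA
  exact pos_of_mul_pos_left hA hp.le

theorem PosDef.dotProduct_mulVec_inv_sqrt_smul {A B : Matrix n n 𝕜}
    (hB : B.PosDef) {v : n → 𝕜} (hv : v ≠ 0) {μ : ℝ} (h : A *ᵥ v = (μ : 𝕜) • (B *ᵥ v)) :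
    star ((((√(RCLike.re (star v ⬝ᵥ (B *ᵥ v))))⁻¹ : ℝ) : 𝕜) • v) ⬝ᵥ
      (A *ᵥ ((((√(RCLike.re (star v ⬝ᵥ (B *ᵥ v))))⁻¹ : ℝ) : 𝕜) • v)) = μ := by
  obtain ⟨p, hp, hpB⟩ := RCLike.pos_iff_exists_ofReal.mp (hB.dotProduct_mulVec_pos hv)
  rw [← hpB, RCLike.ofReal_re, mulVec_smul, h, star_smul, smul_dotProduct, dotProduct_smul,
    dotProduct_smul, ← hpB]
  simp only [smul_eq_mul, RCLike.star_def, RCLike.conj_ofReal]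
  norm_cast
  field_simp
  rw [Real.sq_sqrt hp.le]
  ring

theorem norm_det_eq_of_det_conjTranspose_mul_mul [DecidableEq n] {G W : Matrix n n 𝕜}
    {d μ : ℝ} (hd : 0 < d) (hG : G.det = d) (h : (Wᴴ * G * W).det = μ) :
    ‖W.det‖ = √μ * (√d)⁻¹ := by
  have hμ : d * ‖W.det‖ ^ 2 = μ := by
    apply RCLike.ofReal_injective (K := 𝕜)
    rw [RCLike.ofReal_mul, RCLike.ofReal_pow, ← h, det_mul, det_mul, det_conjTranspose, hG,
      RCLike.star_def, mul_comm _ (d : 𝕜), mul_assoc, RCLike.conj_mul]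
  rw [← hμ, Real.sqrt_mul hd.le, Real.sqrt_sq (norm_nonneg _)]
  field_simp

end Matrix

theorem absDet_of_gevp_form_general (L : ℕ)
    (G1 Gz : Matrix (Fin 1 ⊕ Fin L) (Fin 1 ⊕ Fin L) ℂ)
    (hG1 : G1.PosDef) (hGz : Gz.PosDef)
    (u1 : Fin 1 ⊕ Fin L → ℂ) (hu1 : u1 ≠ 0) (lam : ℝ)
    (hgevp : Gz *ᵥ u1 = (lam : ℂ) • (G1 *ᵥ u1))
    (Uz : Matrix (Fin 1 ⊕ Fin L) (Fin L) ℂ)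
    (horth : (Uzᴴ * Gz) *ᵥ u1 = 0) :
    ∀ S : Matrix (Fin L) (Fin L) ℂ, S.PosDef → S * S = Uzᴴ * Gz * Uz →
      ∀ W : Matrix (Fin 1 ⊕ Fin L) (Fin 1 ⊕ Fin L) ℂ,
        W = Matrix.fromCols
          (Matrix.of fun i (_ : Fin 1) =>
            (((Real.sqrt ((star u1 ⬝ᵥ (G1 *ᵥ u1)).re))⁻¹ : ℝ) : ℂ) * u1 i)
          (Uz * S⁻¹) →
        0 < lam ∧
        ∃ d : ℝ, 0 < d ∧ Gz.det = (d : ℂ) ∧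
          ‖W.det‖ = Real.sqrt lam * (Real.sqrt d)⁻¹ := by
  intro S hS hSS W hW
  obtain ⟨d, hd, hdet⟩ := RCLike.pos_iff_exists_ofReal.mp hGz.det_pos
  refine ⟨hGz.pos_of_mulVec_eq_smul_mulVec hG1 hu1 hgevp, d, hd, hdet.symm,
    norm_det_eq_of_det_conjTranspose_mul_mul hd hdet.symm ?_⟩
  set a : ℂ := (((√(star u1 ⬝ᵥ (G1 *ᵥ u1)).re)⁻¹ : ℝ) : ℂ)
  have hw1 : (of fun i (_ : Fin 1) => a * u1 i) = replicateCol (Fin 1) (a • u1) := rfl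
  have h11 : (replicateCol (Fin 1) (a • u1))ᴴ * Gz * replicateCol (Fin 1) (a • u1) =
      of fun _ _ => (lam : ℂ) := by
    rw [conjTranspose_replicateCol_mul_mul_replicateCol]
    ext
    exact hG1.dotProduct_mulVec_inv_sqrt_smul hu1 hgevp
  have h21 : (Uz * S⁻¹)ᴴ * Gz * replicateCol (Fin 1) (a • u1) = 0 := by
    rw [conjTranspose_mul, Matrix.mul_assoc, Matrix.mul_assoc, ← Matrix.mul_assoc Uzᴴ,
      ← replicateCol_mulVec, mulVec_smul, horth, smul_zero, replicateCol_zero, Matrix.mul_zero]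
  have h22 : (Uz * S⁻¹)ᴴ * Gz * (Uz * S⁻¹) = 1 :=
    conjTranspose_mul_mul_eq_one_of_mul_self_eq hS.isHermitian
      ((isUnit_iff_isUnit_det S).mp hS.isUnit) hSS
  rw [hW, hw1, conjTranspose_fromCols_mul_mul_fromCols, h11, h21, h22, det_fromBlocks_zero₂₁,
    det_one, mul_one, det_unique, of_apply]
  -- `Complex.ofReal` against the `RCLike` coercion `algebraMap ℝ ℂ`
  rfl

/-- If `(u_1, λ)` is a generalized eigenpair of `(G_z, G_1)`, `U_zᴴ G_z u_1 = 0`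
and `U = [u_1, U_z]` is invertible, then for
`W = [u_1 (u_1ᴴ G_1 u_1)^{−1/2}, U_z (U_zᴴ G_z U_z)^{−1/2}]` we have `λ > 0` and
`|det W| = √λ · (det G_z)^{−1/2}`, where `det G_z` is a positive real number. -/
theorem absDet_of_gevp_form (L : ℕ) (hL : 1 ≤ L)
    (G1 Gz : Matrix (Fin 1 ⊕ Fin L) (Fin 1 ⊕ Fin L) ℂ)
    (hG1 : G1.PosDef) (hGz : Gz.PosDef)
    (u1 : Fin 1 ⊕ Fin L → ℂ) (hu1 : u1 ≠ 0) (lam : ℝ)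
    (hgevp : Gz *ᵥ u1 = (lam : ℂ) • (G1 *ᵥ u1))
    (Uz : Matrix (Fin 1 ⊕ Fin L) (Fin L) ℂ)
    (horth : (Uzᴴ * Gz) *ᵥ u1 = 0)
    (hinv : IsUnit (Matrix.fromCols (Matrix.of fun i (_ : Fin 1) => u1 i) Uz).det) :
    ∀ S : Matrix (Fin L) (Fin L) ℂ, S.PosDef → S * S = Uzᴴ * Gz * Uz →
      ∀ W : Matrix (Fin 1 ⊕ Fin L) (Fin 1 ⊕ Fin L) ℂ,
        W = Matrix.fromCols
          (Matrix.of fun i (_ : Fin 1) =>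
            (((Real.sqrt ((star u1 ⬝ᵥ (G1 *ᵥ u1)).re))⁻¹ : ℝ) : ℂ) * u1 i)
          (Uz * S⁻¹) →
        0 < lam ∧
        ∃ d : ℝ, 0 < d ∧ Gz.det = (d : ℂ) ∧
          ‖W.det‖ = Real.sqrt lam * (Real.sqrt d)⁻¹ :=
  absDet_of_gevp_form_general L G1 Gz hG1 hGz u1 hu1 lam hgevp Uz horth
end

section
/- Let G be an invertible M×M complex matrix (in particular any positive definite Hermitian matrix), let W = [W_s, W_z] ∈ ℂ^{M×M} be invertible with W_s ∈ ℂ^{M×K} its first K columns, let R ∈ ℂ^{(M−K)×(M−K)} be invertible, and set W′ = [W_s, W_z R]. Then for every k with 1 ≤ k ≤ K, ((W′)^H G)^{−1} e_k = (W^H G)^{−1} e_k. -/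
/-! Writing `D = fromBlocks 1 0 0 R`, we have `W' = W * D`, hence
`(W'ᴴ G)⁻¹ = (Wᴴ G)⁻¹ (Dᴴ)⁻¹`. Since `Dᴴ` is the identity on the first `K`
coordinates, so is its inverse, and `(Dᴴ)⁻¹ e_k = e_k` for `k ≤ K`. -/

open Matrix

namespace Matrix

theorem inv_mul_mulVec_of_mulVec_eq_self {n R : Type*} [Fintype n] [DecidableEq n] [CommRing R]
    {D : Matrix n n R} (hD : IsUnit D.det) (B : Matrix n n R) {v : n → R}
    (hv : D *ᵥ v = v) : (D * B)⁻¹ *ᵥ v = B⁻¹ *ᵥ v := by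
  have hinv : D⁻¹ *ᵥ v = v := by
    conv_lhs => rw [← hv]
    rw [mulVec_mulVec, nonsing_inv_mul _ hD, one_mulVec]
  rw [mul_inv_rev, ← mulVec_mulVec, hinv]

theorem fromBlocks_one_zero_zero_mulVec_single_inl {m l R : Type*} [Fintype m] [Fintype l]
    [DecidableEq m] [DecidableEq l] [Semiring R] (S : Matrix l l R) (k : m) (c : R) :
    fromBlocks 1 0 0 S *ᵥ Pi.single (Sum.inl k) c = Pi.single (Sum.inl k) c := by
  ext (i | i) <;> simp [mulVec_single, one_apply, Pi.single_apply]

-- Without the ascription, `*` elaborates to `CStarMatrix`'s multiplication.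
theorem fromCols_mul_fromBlocks_one_zero_zero {m n₁ n₂ R : Type*} [Fintype n₁] [Fintype n₂]
    [DecidableEq n₁] [Semiring R] (A₁ : Matrix m n₁ R) (A₂ : Matrix m n₂ R)
    (S : Matrix n₂ n₂ R) :
    fromCols A₁ A₂ * (fromBlocks 1 0 0 S : Matrix (n₁ ⊕ n₂) (n₁ ⊕ n₂) R) =
      fromCols A₁ (A₂ * S) := by
  simp [fromCols_mul_fromBlocks]

end Matrix

theorem inv_WHG_ek_invariant_general (K L : ℕ)
    (G : Matrix (Fin K ⊕ Fin L) (Fin K ⊕ Fin L) ℂ)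
    (W : Matrix (Fin K ⊕ Fin L) (Fin K ⊕ Fin L) ℂ)
    (R : Matrix (Fin L) (Fin L) ℂ) (hR : IsUnit R.det)
    (W' : Matrix (Fin K ⊕ Fin L) (Fin K ⊕ Fin L) ℂ)
    (hW' : W' = Matrix.fromCols (W.submatrix id Sum.inl)
      ((W.submatrix id Sum.inr) * R)) :
    ∀ k : Fin K,
      (W'ᴴ * G)⁻¹ *ᵥ Pi.single (Sum.inl k) 1 =
        (Wᴴ * G)⁻¹ *ᵥ Pi.single (Sum.inl k) 1 := by
  intro k
  have hW'_eq : W' = W * fromBlocks 1 0 0 R := by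
    conv_rhs => rw [← fromCols_toCols W]
    rw [hW', fromCols_mul_fromBlocks_one_zero_zero]
    rfl
  have hDH : IsUnit (fromBlocks 1 0 0 Rᴴ : Matrix (Fin K ⊕ Fin L) (Fin K ⊕ Fin L) ℂ).det := by
    rw [det_fromBlocks_zero₂₁, det_one, one_mul, det_conjTranspose]
    exact hR.star
  rw [hW'_eq, conjTranspose_mul, fromBlocks_conjTranspose, conjTranspose_one,
    conjTranspose_zero, conjTranspose_zero, mul_assoc]
  exact inv_mul_mulVec_of_mulVec_eq_self hDH _ (fromBlocks_one_zero_zero_mulVec_single_inl _ _ _)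

/-- Replacing `W_z` by `W_z R` (with `R` invertible) does not change
`(Wᴴ G)⁻¹ e_k` for `k = 1, …, K`. -/
theorem inv_WHG_ek_invariant (K L : ℕ) (hK : 1 ≤ K) (hL : 1 ≤ L)
    (G : Matrix (Fin K ⊕ Fin L) (Fin K ⊕ Fin L) ℂ) (hG : IsUnit G.det)
    (W : Matrix (Fin K ⊕ Fin L) (Fin K ⊕ Fin L) ℂ) (hW : IsUnit W.det)
    (R : Matrix (Fin L) (Fin L) ℂ) (hR : IsUnit R.det)
    (W' : Matrix (Fin K ⊕ Fin L) (Fin K ⊕ Fin L) ℂ)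
    (hW' : W' = Matrix.fromCols (W.submatrix id Sum.inl)
      ((W.submatrix id Sum.inr) * R)) :
    ∀ k : Fin K,
      (W'ᴴ * G)⁻¹ *ᵥ Pi.single (Sum.inl k) 1 =
        (Wᴴ * G)⁻¹ *ᵥ Pi.single (Sum.inl k) 1 :=
  inv_WHG_ek_invariant_general K L G W R hR W' hW'
end
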